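/- Let Y_V be a discrete random vector with strictly positive probability table, V = P ∪̇ B, and Y^B = (Y_P, X_{J_B}) its B-expansion. Let μ̃^{j_Q}_K (for j_Q in the restricted state space of Y_Q, Q ⊆ P, K ⊆ J_B) denote the Möbius parameters of Y^B and γ̃^{j_Q}_K the corresponding LML parameters. If L ⊆ P ∪ J_B is primary with L = Q ∪ j_D, then μ^{j_{Q∪D}} = μ̃^{j_Q}_{j_D} and γ^{j_{Q∪D}} = γ̃^{j_Q}_{j_D} for every j_Q ∈ J_Q, where μ and γ are the Möbius and LML parameters of Y_V and j_{Q∪D} = j_Q ∪ j_D. If L = Q ∪ K is non-primary, then μ̃^{j_Q}_K = 0 for every j_Q ∈ J_Q (dichotomization invariance). -/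

import Mathlib

/-! A primary set `j_D` holds exactly one level of each variable of `D`, so the event
`X_{j_D} = 1` is the event `Y_D = j_D`: the Möbius parameters agree. Since `D' ↦ j_{D'}` is a
cardinality-preserving bijection from the subsets of `D` onto those of `j_D`, the alternating
sums defining `γ` and `γ̃` then agree term by term. A non-primary `K` asks for two different
levels of one variable at once, which is the empty event. -/

open Finset

open Classical in
/-- Probability of an event under a distribution `p` on a finite sample space. -/
noncomputable def Pr {Ω : Type*} [Fintype Ω] (p : Ω → ℝ) (φ : Ω → Prop) : ℝ :=
  ∑ x ∈ Finset.univ.filter (fun x => φ x), p x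

/-- Möbius parameter `μ^{j_U} = P(Y_U = j_U)` of `Y_V`. -/
noncomputable def mobY {V : Type*} [Fintype V] [DecidableEq V] {I : V → Type*}
    [∀ v, Fintype (I v)] (p : (∀ v, I v) → ℝ) (U : Finset V) (j : ∀ v, I v) : ℝ :=
  Pr p (fun x => ∀ v ∈ U, x v = j v)

/-- LML parameter `γ^{j_U}` of `Y_V`. -/
noncomputable def lmlY {V : Type*} [Fintype V] [DecidableEq V] {I : V → Type*}
    [∀ v, Fintype (I v)] (p : (∀ v, I v) → ℝ) (U : Finset V) (j : ∀ v, I v) : ℝ :=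
  ∑ E ∈ U.powerset, (-1 : ℝ) ^ (U \ E).card * Real.log (mobY p E j)

/-- Möbius parameter `μ̃^{j_Q}_K = P(Y_Q = j_Q, X_K = 1_K)` of the `B`-expansion
`Y^B = (Y_P, X_{J_B})`; levels in `J_B` are encoded as elements of `Σ v, I v`. -/
noncomputable def mobExp {V : Type*} [Fintype V] [DecidableEq V] {I : V → Type*}
    [∀ v, Fintype (I v)] (p : (∀ v, I v) → ℝ)
    (Q : Finset V) (K : Finset (Σ v, I v)) (j : ∀ v, I v) : ℝ :=
  Pr p (fun x => (∀ v ∈ Q, x v = j v) ∧ ∀ s ∈ K, x s.1 = s.2)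

/-- LML parameter `γ̃^{j_Q}_K` of the `B`-expansion (Möbius transform of
`log μ̃` over the subset lattice of `Q ∪ K`). -/
noncomputable def lmlExp {V : Type*} [Fintype V] [DecidableEq V] {I : V → Type*}
    [∀ v, Fintype (I v)] [∀ v, DecidableEq (I v)] (p : (∀ v, I v) → ℝ)
    (Q : Finset V) (K : Finset (Σ v, I v)) (j : ∀ v, I v) : ℝ :=
  ∑ Q' ∈ Q.powerset, ∑ K' ∈ K.powerset,
    (-1 : ℝ) ^ ((Q \ Q').card + (K \ K').card) * Real.log (mobExp p Q' K' j)

namespace Finset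

theorem sum_powerset_union_of_disjoint {α β : Type*} [DecidableEq α] [AddCommMonoid β]
    {s t : Finset α} (h : Disjoint s t) (f : Finset α → β) :
    ∑ u ∈ (s ∪ t).powerset, f u = ∑ a ∈ s.powerset, ∑ b ∈ t.powerset, f (a ∪ b) := by
  rw [← sum_product']
  refine sum_nbij' (fun u => (u ∩ s, u ∩ t)) (fun ab => ab.1 ∪ ab.2) ?_ ?_ ?_ ?_ ?_
  · intro u _
    simp
  · rintro ⟨a, b⟩ hab
    simp only [mem_product, mem_powerset] at hab ⊢
    exact union_subset_union hab.1 hab.2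
  · intro u hu
    rw [← inter_union_distrib_left, inter_eq_left.mpr (mem_powerset.mp hu)]
  · rintro ⟨a, b⟩ hab
    simp only [mem_product, mem_powerset] at hab
    have ha : a ∩ t = ∅ := disjoint_iff_inter_eq_empty.mp (h.mono_left hab.1)
    have hb : b ∩ s = ∅ := disjoint_iff_inter_eq_empty.mp (h.symm.mono_left hab.2)
    simp [union_inter_distrib_right, inter_eq_left.mpr hab.1, inter_eq_left.mpr hab.2, ha, hb]
  · intro u hu
    rw [← inter_union_distrib_left, inter_eq_left.mpr (mem_powerset.mp hu)]

end Finset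

section

variable {V : Type*} [DecidableEq V] {I : V → Type*} [∀ v, DecidableEq (I v)]

/-- The primary set `j_D ⊆ J_D` of the levels `j v`, `v ∈ D`. -/
def levelSet (j : ∀ v, I v) (D : Finset V) : Finset (Σ v, I v) :=
  D.image fun v => ⟨v, j v⟩

theorem mem_levelSet {j : ∀ v, I v} {D : Finset V} {s : Σ v, I v} :
    s ∈ levelSet j D ↔ s.1 ∈ D ∧ s = ⟨s.1, j s.1⟩ := by
  constructor
  · intro hs
    obtain ⟨v, hv, rfl⟩ := mem_image.mp hs
    exact ⟨hv, rfl⟩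
  · rintro ⟨hs, hsj⟩
    exact mem_image.mpr ⟨s.1, hs, hsj.symm⟩

theorem levelSet_sdiff (j : ∀ v, I v) (D D' : Finset V) :
    levelSet j D \ levelSet j D' = levelSet j (D \ D') :=
  (image_sdiff _ _ fun _ _ h => congrArg Sigma.fst h).symm

theorem card_levelSet (j : ∀ v, I v) (D : Finset V) : (levelSet j D).card = D.card :=
  card_image_of_injective _ fun _ _ h => congrArg Sigma.fst h

theorem sum_powerset_levelSet {β : Type*} [AddCommMonoid β] (j : ∀ v, I v) (D : Finset V)
    (f : Finset (Σ v, I v) → β) :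
    ∑ K ∈ (levelSet j D).powerset, f K = ∑ D' ∈ D.powerset, f (levelSet j D') := by
  rw [levelSet, powerset_image, sum_image]
  · rfl
  · exact image_injOn_powerset_of_injOn fun _ _ _ _ h => congrArg Sigma.fst h

variable [Fintype V] [∀ v, Fintype (I v)]

theorem mobExp_levelSet (p : (∀ v, I v) → ℝ) (Q D : Finset V) (j : ∀ v, I v) :
    mobExp p Q (levelSet j D) j = mobY p (Q ∪ D) j := by
  unfold mobExp mobY Pr
  congr 1
  ext x
  simp [levelSet, or_imp, forall_and]

theorem lmlExp_levelSet (p : (∀ v, I v) → ℝ) {Q D : Finset V} (hQD : Disjoint Q D)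
    (j : ∀ v, I v) : lmlExp p Q (levelSet j D) j = lmlY p (Q ∪ D) j := by
  rw [lmlExp, lmlY, sum_powerset_union_of_disjoint hQD]
  refine sum_congr rfl fun Q' hQ' => ?_
  rw [sum_powerset_levelSet]
  refine sum_congr rfl fun D' hD' => ?_
  have hsdiff : (Q ∪ D) \ (Q' ∪ D') = (Q \ Q') ∪ (D \ D') := by
    have hQD' := disjoint_left.mp hQD
    have hQ'Q := mem_powerset.mp hQ'
    have hD'D := mem_powerset.mp hD'
    ext a
    simp only [mem_sdiff, mem_union]
    grind
  rw [mobExp_levelSet, levelSet_sdiff, card_levelSet, hsdiff,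
    card_union_of_disjoint (hQD.mono sdiff_subset sdiff_subset)]

theorem mobExp_eq_zero_of_fst_eq (p : (∀ v, I v) → ℝ) (Q : Finset V) {K : Finset (Σ v, I v)}
    {s t : Σ v, I v} (hs : s ∈ K) (ht : t ∈ K) (hst : s.1 = t.1) (hne : s ≠ t) (j : ∀ v, I v) :
    mobExp p Q K j = 0 := by
  obtain ⟨v, a⟩ := s
  obtain ⟨w, b⟩ := t
  obtain rfl : v = w := hst
  refine sum_eq_zero fun x hx => ?_
  simp only [mem_filter] at hx
  have hab : a = b := (hx.2.2 ⟨v, a⟩ hs).symm.trans (hx.2.2 ⟨v, b⟩ ht)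
  exact absurd (by rw [hab]) hne

end

theorem stmt15_general {V : Type*} [Fintype V] [DecidableEq V] {I : V → Type*}
    [∀ v, Fintype (I v)] [∀ v, DecidableEq (I v)] (z : ∀ v, I v)
    (P B : Finset V) (hPB : Disjoint P B)
    (p : (∀ v, I v) → ℝ) :
    (∀ Q ⊆ P, ∀ D ⊆ B, ∀ (j : ∀ v, I v), (∀ v ∈ Q ∪ D, j v ≠ z v) →
      ∀ K : Finset (Σ v, I v),
        (∀ s : Σ v, I v, s ∈ K ↔ (s.1 ∈ D ∧ s = ⟨s.1, j s.1⟩)) →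
        (mobY p (Q ∪ D) j = mobExp p Q K j ∧ lmlY p (Q ∪ D) j = lmlExp p Q K j)) ∧
    (∀ Q ⊆ P, ∀ K : Finset (Σ v, I v), (∀ s ∈ K, s.1 ∈ B ∧ s.2 ≠ z s.1) →
      (∃ s ∈ K, ∃ t ∈ K, s.1 = t.1 ∧ s ≠ t) →
      ∀ j : ∀ v, I v, (∀ v ∈ Q, j v ≠ z v) → mobExp p Q K j = 0) := by
  refine ⟨fun Q hQ D hD j _ K hK => ?_, fun Q _ K _ ⟨s, hs, t, ht, hst, hne⟩ j _ => ?_⟩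
  · obtain rfl : K = levelSet j D := ext fun s => (hK s).trans mem_levelSet.symm
    exact ⟨(mobExp_levelSet p Q D j).symm,
      (lmlExp_levelSet p (hPB.mono hQ hD) j).symm⟩
  · exact mobExp_eq_zero_of_fst_eq p Q hs ht hst hne j

/-- dichotomization invariance: let `Y_V`, `V = P ∪̇ B`, be a
strictly positive discrete vector with baselines `z`, and `Y^B = (Y_P, X_{J_B})`
its `B`-expansion. If `L = Q ∪ j_D` is a primary subset of `P ∪ J_B` (`Q ⊆ P`,
`D ⊆ B`, `K` selecting the non-baseline level `j v` for each `v ∈ D`), then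
`μ^{j_{Q∪D}} = μ̃^{j_Q}_{j_D}` and `γ^{j_{Q∪D}} = γ̃^{j_Q}_{j_D}`.
If `L = Q ∪ K` is non-primary, then `μ̃^{j_Q}_K = 0`. -/
theorem stmt15 {V : Type*} [Fintype V] [DecidableEq V] {I : V → Type*}
    [∀ v, Fintype (I v)] [∀ v, DecidableEq (I v)] (z : ∀ v, I v)
    (P B : Finset V) (hPB : Disjoint P B) (hPBu : P ∪ B = Finset.univ)
    (p : (∀ v, I v) → ℝ) (hp : ∀ x, 0 < p x) (hsum : ∑ x, p x = 1) :
    (∀ Q ⊆ P, ∀ D ⊆ B, ∀ (j : ∀ v, I v), (∀ v ∈ Q ∪ D, j v ≠ z v) →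
      ∀ K : Finset (Σ v, I v),
        (∀ s : Σ v, I v, s ∈ K ↔ (s.1 ∈ D ∧ s = ⟨s.1, j s.1⟩)) →
        (mobY p (Q ∪ D) j = mobExp p Q K j ∧ lmlY p (Q ∪ D) j = lmlExp p Q K j)) ∧
    (∀ Q ⊆ P, ∀ K : Finset (Σ v, I v), (∀ s ∈ K, s.1 ∈ B ∧ s.2 ≠ z s.1) →
      (∃ s ∈ K, ∃ t ∈ K, s.1 = t.1 ∧ s ≠ t) →
      ∀ j : ∀ v, I v, (∀ v ∈ Q, j v ≠ z v) → mobExp p Q K j = 0) :=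
  stmt15_general z P B hPB p
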